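/- arXiv:2105.07535 — 2 statements merged into one kernel-verified Lean document; each statement's English description precedes it below -/
import Mathlib

section
/- Lower bound on the probability of the conditionally typical set: let p_{X,Y} match a joint type P with X-marginal Q, and suppose x ∈ A*_{ε/(2|Y|)}^(n)(Q). Then Pr(p_{Y|X}, A*_ε^(n)(P|x) | x) > 1 − δ_t(n, ε/2, X×Y), where δ_t(n,ε,X×Y) = (n+1)^{|X||Y|}·exp(−n·ε²·log e/(2|X|²|Y|²)), and Pr(p_{Y|X}, A | x) = Σ_{y∈A} Π_i p_{Y|X}(y_i|x_i). In particular this probability tends to 1 as n → ∞. -/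
open Finset Filter

/-- Empirical type of a sequence. -/
noncomputable def empType {Z : Type*} [Fintype Z] [DecidableEq Z] {n : ℕ}
    (z : Fin n → Z) (a : Z) : ℝ :=
  ((Finset.univ.filter (fun k : Fin n => z k = a)).card : ℝ) / n

/-- Joint empirical type of a pair of sequences. -/
noncomputable def jointType {X Y : Type*} [Fintype X] [Fintype Y]
    [DecidableEq X] [DecidableEq Y] {n : ℕ}
    (x : Fin n → X) (y : Fin n → Y) (a : X) (b : Y) : ℝ :=
  ((Finset.univ.filter (fun k : Fin n => x k = a ∧ y k = b)).card : ℝ) / n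

/-- Strongly ε-typical set for single sequences. -/
def typSet {X : Type*} [Fintype X] [DecidableEq X] (n : ℕ)
    (Q : X → ℝ) (ε : ℝ) : Set (Fin n → X) :=
  {x | (∀ a, |empType x a - Q a| < ε / (Fintype.card X)) ∧
       (∀ a, Q a = 0 → empType x a = 0)}

/-- Strongly jointly ε-typical set. -/
def jointTypSet {X Y : Type*} [Fintype X] [Fintype Y]
    [DecidableEq X] [DecidableEq Y] (n : ℕ)
    (P : X → Y → ℝ) (ε : ℝ) : Set ((Fin n → X) × (Fin n → Y)) :=
  {q | (∀ a b, |jointType q.1 q.2 a b - P a b| <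
          ε / ((Fintype.card X) * (Fintype.card Y))) ∧
       (∀ a b, P a b = 0 → jointType q.1 q.2 a b = 0)}

/-- Strongly conditionally typical set. -/
def condTypSet {X Y : Type*} [Fintype X] [Fintype Y]
    [DecidableEq X] [DecidableEq Y] (n : ℕ)
    (P : X → Y → ℝ) (ε : ℝ) (x : Fin n → X) : Set (Fin n → Y) :=
  {y | (x, y) ∈ jointTypSet n P ε}


/-- The quantity δ_t(n, ε, X×Y). -/
noncomputable def deltaT (X Y : Type*) [Fintype X] [Fintype Y]
    (n : ℕ) (ε : ℝ) : ℝ :=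
  ((n : ℝ) + 1) ^ (Fintype.card X * Fintype.card Y) *
    Real.exp (-(n : ℝ) * ε ^ 2 * Real.log (Real.exp 1) /
      (2 * (Fintype.card X : ℝ) ^ 2 * (Fintype.card Y : ℝ) ^ 2))

/-!
Under the product law `∏ i, J (x i) (y i)` the count `#{k | x k = a ∧ y k = b}` is a sum of
independent indicators with mean `#{k | x k = a} * J a b`. If `y` has positive probability and is
not conditionally typical, the support condition holds automatically, so some joint type misses
`P a b = Q a * J a b` by at least `2t`, where `t = ε / (2|X||Y|)`. As `x` is typical, the marginal
accounts for less than `t` of this, so the count deviates from its mean by more than `n t`.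
Hoeffding's inequality bounds each such event by `2 exp (-2 n t²)`, and the union bound over the
`|X||Y|` pairs stays below `δ_t(n, ε/2) = (n+1)^{|X||Y|} exp (-n t² / 2)`.
-/

open MeasureTheory ProbabilityTheory

section Hoeffding

theorem measureReal_le_abs_sum_sub_integral_le {Ω ι : Type*} [MeasurableSpace Ω]
    {μ : Measure Ω} [IsProbabilityMeasure μ] [Fintype ι] {X : ι → Ω → ℝ}
    (hind : iIndepFun X μ) (hm : ∀ i, AEMeasurable (X i) μ)
    (hX : ∀ i, ∀ᵐ ω ∂μ, X i ω ∈ Set.Icc (0 : ℝ) 1) {s : ℝ} (hs : 0 ≤ s) :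
    μ.real {ω | s ≤ |∑ i, (X i ω - μ[X i])|} ≤ 2 * Real.exp (-2 * s ^ 2 / Fintype.card ι) := by
  set c : NNReal := (‖(1 : ℝ) - 0‖₊ / 2) ^ 2
  have hoeffding (Z : ι → Ω → ℝ) (hZ : iIndepFun Z μ)
      (hsub : ∀ i ∈ univ, HasSubgaussianMGF (Z i) c μ) :
      μ.real {ω | s ≤ ∑ i, Z i ω} ≤ Real.exp (-2 * s ^ 2 / Fintype.card ι) := by
    refine (HasSubgaussianMGF.measure_sum_ge_le_of_iIndepFun hZ hsub hs).trans_eq ?_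
    simp only [c, sub_zero, nnnorm_one, sum_const, card_univ, nsmul_eq_mul]
    push_cast
    ring_nf
  have hsub (i : ι) (_ : i ∈ univ) : HasSubgaussianMGF (fun ω => X i ω - μ[X i]) c μ :=
    hasSubgaussianMGF_of_mem_Icc (hm i) (hX i)
  have hind_sub : iIndepFun (fun i ω => X i ω - μ[X i]) μ :=
    hind.comp _ fun i => measurable_id.sub_const _
  calc μ.real {ω | s ≤ |∑ i, (X i ω - μ[X i])|}
      ≤ μ.real ({ω | s ≤ ∑ i, (X i ω - μ[X i])} ∪ {ω | s ≤ ∑ i, -(X i ω - μ[X i])}) := by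
        refine measureReal_mono (fun ω hω => ?_)
        rw [Set.mem_union, Set.mem_ofPred, Set.mem_ofPred, sum_neg_distrib]
        exact le_abs.mp hω
    _ ≤ _ := measureReal_union_le _ _
    _ ≤ 2 * Real.exp (-2 * s ^ 2 / Fintype.card ι) := by
        rw [two_mul]
        exact add_le_add (hoeffding _ hind_sub hsub)
          (hoeffding _ (hind_sub.comp _ fun i => measurable_neg) fun i hi => (hsub i hi).neg)

end Hoeffding

section ProductMeasure

variable {ι Y : Type*} [Fintype Y]

noncomputable def realPMF (p : Y → ℝ) (hp0 : ∀ b, 0 ≤ p b) (hp1 : ∑ b, p b = 1) : PMF Y :=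
  PMF.ofFintype (fun b => ENNReal.ofReal (p b)) (by
    rw [← ENNReal.ofReal_sum_of_nonneg fun b _ => hp0 b, hp1, ENNReal.ofReal_one])

lemma realPMF_apply_toReal (p : Y → ℝ) (hp0 : ∀ b, 0 ≤ p b) (hp1 : ∑ b, p b = 1) (b : Y) :
    (realPMF p hp0 hp1 b).toReal = p b := by
  rw [realPMF, PMF.ofFintype_apply, ENNReal.toReal_ofReal (hp0 b)]

variable [Fintype ι] [MeasurableSpace Y] [MeasurableSingletonClass Y]
  (w : ι → Y → ℝ) (hw0 : ∀ i b, 0 ≤ w i b) (hw1 : ∀ i, ∑ b, w i b = 1)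

lemma measureReal_pi_realPMF (S : Finset (ι → Y)) :
    (Measure.pi fun i => (realPMF (w i) (hw0 i) (hw1 i)).toMeasure).real S =
      ∑ y ∈ S, ∏ i, w i (y i) := by
  rw [← sum_measureReal_singleton]
  refine sum_congr rfl fun y _ => ?_
  simp only [measureReal_def, Measure.pi_singleton, ENNReal.toReal_prod]
  refine prod_congr rfl fun i _ => ?_
  rw [PMF.toMeasure_apply_singleton _ _ (measurableSet_singleton _), realPMF_apply_toReal]

lemma ae_pi_realPMF_ne_zero :
    ∀ᵐ y ∂(Measure.pi fun i => (realPMF (w i) (hw0 i) (hw1 i)).toMeasure), ∀ i, w i (y i) ≠ 0 := by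
  refine ae_iff_of_countable.mpr fun y hy i hi => hy ?_
  rw [Measure.pi_singleton]
  refine prod_eq_zero (mem_univ i) ?_
  rw [PMF.toMeasure_apply_singleton _ _ (measurableSet_singleton _), realPMF,
    PMF.ofFintype_apply, hi, ENNReal.ofReal_zero]

lemma integral_pi_realPMF [DecidableEq ι] (i : ι) (g : Y → ℝ) :
    ∫ y, g (y i) ∂(Measure.pi fun i => (realPMF (w i) (hw0 i) (hw1 i)).toMeasure) =
      ∑ b, w i b * g b := by
  rw [← integral_map (measurable_pi_apply i).aemeasurable
      Measurable.of_discrete.aestronglyMeasurable,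
    (measurePreserving_eval _ i).map_eq, PMF.integral_eq_sum]
  simp only [realPMF_apply_toReal, smul_eq_mul]

theorem measureReal_pi_realPMF_le_abs_sum_sub_le [DecidableEq ι] (f : ι → Y → ℝ)
    (hf : ∀ i b, f i b ∈ Set.Icc (0 : ℝ) 1) {s : ℝ} (hs : 0 ≤ s) :
    (Measure.pi fun i => (realPMF (w i) (hw0 i) (hw1 i)).toMeasure).real
        {y | s ≤ |∑ i, (f i (y i) - ∑ b, w i b * f i b)|} ≤
      2 * Real.exp (-2 * s ^ 2 / Fintype.card ι) := by
  have h := measureReal_le_abs_sum_sub_integral_le (s := s)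
    (μ := Measure.pi fun i => (realPMF (w i) (hw0 i) (hw1 i)).toMeasure)
    (X := fun i y => f i (y i)) (iIndepFun_pi fun i => Measurable.of_discrete.aemeasurable)
    (fun i => (Measurable.of_discrete.comp (measurable_pi_apply i)).aemeasurable)
    (fun i => ae_of_all _ fun y => hf i (y i)) hs
  simpa only [integral_pi_realPMF] using h

end ProductMeasure

section EmpiricalTypes

variable {X Y : Type*} [Fintype X] [Fintype Y] [DecidableEq X] [DecidableEq Y] {n : ℕ}

lemma natCast_mul_empType (x : Fin n → X) (a : X) :
    (n : ℝ) * empType x a = #{k | x k = a} := by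
  rcases n.eq_zero_or_pos with rfl | hn
  · simp
  · rw [empType, mul_div_cancel₀ _ (by positivity)]

lemma natCast_mul_jointType (x : Fin n → X) (y : Fin n → Y) (a : X) (b : Y) :
    (n : ℝ) * jointType x y a b = #{k | x k = a ∧ y k = b} := by
  rcases n.eq_zero_or_pos with rfl | hn
  · simp
  · rw [jointType, mul_div_cancel₀ _ (by positivity)]

lemma empType_ne_zero {x : Fin n → X} {a : X} {k : Fin n} (hk : x k = a) : empType x a ≠ 0 := by
  refine fun h => ?_
  have := natCast_mul_empType x a
  rw [h, mul_zero, eq_comm, Nat.cast_eq_zero, card_eq_zero, filter_eq_empty_iff] at this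
  exact this (mem_univ k) hk

lemma exists_of_jointType_ne_zero {x : Fin n → X} {y : Fin n → Y} {a : X} {b : Y}
    (h : jointType x y a b ≠ 0) : ∃ k, x k = a ∧ y k = b := by
  by_contra! hxy
  apply h
  rw [jointType, filter_false_of_mem fun k _ hk => hxy k hk.1 hk.2, card_empty, Nat.cast_zero,
    zero_div]

lemma sum_indicator_sub_sum_mul_indicator (J : X → Y → ℝ) (x : Fin n → X) (y : Fin n → Y)
    (a : X) (b : Y) :
    ∑ i, ((if x i = a ∧ y i = b then 1 else 0) -
        ∑ b', J (x i) b' * (if x i = a ∧ b' = b then 1 else 0)) =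
      n * (jointType x y a b - empType x a * J a b) := by
  have hmean (i : Fin n) : ∑ b', J (x i) b' * (if x i = a ∧ b' = b then 1 else 0) =
      if x i = a then J a b else 0 := by
    split_ifs with h <;> simp [h]
  simp only [hmean, sum_sub_distrib, sum_boole, ← sum_filter, sum_const, nsmul_eq_mul, mul_sub,
    ← mul_assoc, natCast_mul_jointType, natCast_mul_empType]

end EmpiricalTypes

lemma jointType_eq_zero_of_eq_zero {X Y : Type*} [Fintype X] [Fintype Y] [DecidableEq X]
    [DecidableEq Y] {n : ℕ} {P : X → Y → ℝ} {Q : X → ℝ} {J : X → Y → ℝ}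
    (hJ : ∀ a b, Q a ≠ 0 → J a b = P a b / Q a) {δ : ℝ} {x : Fin n → X} (hx : x ∈ typSet n Q δ)
    {y : Fin n → Y} (hy : ∀ i, J (x i) (y i) ≠ 0) {a : X} {b : Y} (hPab : P a b = 0) :
    jointType x y a b = 0 := by
  by_contra h
  obtain ⟨k, rfl, rfl⟩ := exists_of_jointType_ne_zero h
  have hQk : Q (x k) ≠ 0 := fun hQk => empType_ne_zero rfl (hx.2 _ hQk)
  exact hy k (by rw [hJ _ _ hQk, hPab, zero_div])

theorem exists_lt_abs_jointType_sub_of_notMem_condTypSet {X Y : Type*} [Fintype X] [Fintype Y]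
    [DecidableEq X] [DecidableEq Y] {n : ℕ} {P : X → Y → ℝ} (hP0 : ∀ a b, 0 ≤ P a b)
    {Q : X → ℝ} (hQ : ∀ a, Q a = ∑ b, P a b) {J : X → Y → ℝ}
    (hJ : ∀ a b, Q a ≠ 0 → J a b = P a b / Q a) (hJ0 : ∀ a b, 0 ≤ J a b)
    (hJ1 : ∀ a, ∑ b, J a b = 1) {ε : ℝ} (hε : 0 < ε) {x : Fin n → X}
    (hx : x ∈ typSet n Q (ε / (2 * Fintype.card Y))) {y : Fin n → Y}
    (hy : ∀ i, J (x i) (y i) ≠ 0) (hny : y ∉ condTypSet n P ε x) :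
    ∃ a b, ε / (2 * (Fintype.card X * Fintype.card Y)) <
      |jointType x y a b - empType x a * J a b| := by
  have hsupp (a : X) (b : Y) : P a b = 0 → jointType x y a b = 0 :=
    jointType_eq_zero_of_eq_zero hJ hx hy
  obtain ⟨a, b, hab⟩ : ∃ a b, ε / (Fintype.card X * Fintype.card Y) ≤
      |jointType x y a b - P a b| := by
    by_contra! h
    exact hny ⟨h, hsupp⟩
  have hQa : Q a ≠ 0 := by
    intro hQa
    have hPab : P a b = 0 :=
      le_antisymm (hQa ▸ hQ a ▸ single_le_sum (fun b _ => hP0 a b) (mem_univ b)) (hP0 a b)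
    rw [hsupp a b hPab, hPab, sub_zero, abs_zero] at hab
    have hX : (0 : ℝ) < Fintype.card X := Nat.cast_pos.mpr (Fintype.card_pos_iff.mpr ⟨a⟩)
    have hY : (0 : ℝ) < Fintype.card Y := Nat.cast_pos.mpr (Fintype.card_pos_iff.mpr ⟨b⟩)
    exact hab.not_gt (by positivity)
  have hJab : J a b ≤ 1 := hJ1 a ▸ single_le_sum (fun b _ => hJ0 a b) (mem_univ b)
  have hemp : |J a b * (empType x a - Q a)| < ε / (2 * (Fintype.card X * Fintype.card Y)) := by
    rw [abs_mul, abs_of_nonneg (hJ0 a b)]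
    calc J a b * |empType x a - Q a| ≤ |empType x a - Q a| :=
          mul_le_of_le_one_left (abs_nonneg _) hJab
      _ < ε / (2 * Fintype.card Y) / Fintype.card X := hx.1 a
      _ = ε / (2 * (Fintype.card X * Fintype.card Y)) := by rw [div_div]; ring_nf
  have hsplit : jointType x y a b - empType x a * J a b =
      (jointType x y a b - P a b) - J a b * (empType x a - Q a) := by
    rw [hJ a b hQa]
    field_simp
    ring
  refine ⟨a, b, ?_⟩
  rw [hsplit]
  have := abs_sub_abs_le_abs_sub (jointType x y a b - P a b) (J a b * (empType x a - Q a))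
  have h2 : ε / (Fintype.card X * Fintype.card Y) =
      2 * (ε / (2 * (Fintype.card X * Fintype.card Y))) := by field_simp
  linarith

section DeltaT

variable (X Y : Type*) [Fintype X] [Fintype Y]

lemma deltaT_eq_mul_exp (n : ℕ) (ε : ℝ) :
    deltaT X Y n ε = ((n : ℝ) + 1) ^ (Fintype.card X * Fintype.card Y) *
      Real.exp (-(ε ^ 2 / (2 * (Fintype.card X : ℝ) ^ 2 * (Fintype.card Y : ℝ) ^ 2)) * n) := by
  rw [deltaT, Real.log_exp]
  ring_nf

variable [Nonempty X] [Nonempty Y]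

lemma tendsto_deltaT {ε : ℝ} (hε : ε ≠ 0) :
    Tendsto (fun n : ℕ => deltaT X Y n ε) atTop (nhds 0) := by
  set c := ε ^ 2 / (2 * (Fintype.card X : ℝ) ^ 2 * (Fintype.card Y : ℝ) ^ 2)
  have hc : 0 < c := by positivity
  have h := ((tendsto_rpow_mul_exp_neg_mul_atTop_nhds_zero
    (Fintype.card X * Fintype.card Y : ℕ) c hc).comp
    (tendsto_atTop_add_const_right _ 1 tendsto_natCast_atTop_atTop)).const_mul (Real.exp c)
  rw [mul_zero] at h
  refine h.congr fun n => ?_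
  simp only [Function.comp_apply, Real.rpow_natCast, deltaT_eq_mul_exp]
  rw [mul_left_comm, ← Real.exp_add]
  congr 2
  ring

lemma two_mul_card_mul_exp_lt_deltaT {n : ℕ} (hn : 0 < n) {ε : ℝ} (hε : ε ≠ 0) :
    2 * (Fintype.card X * Fintype.card Y) *
        Real.exp (-2 * n * (ε / (2 * (Fintype.card X * Fintype.card Y))) ^ 2) <
      deltaT X Y n (ε / 2) := by
  set K := Fintype.card X * Fintype.card Y
  have hK : 2 * K ≤ 2 ^ K := by
    obtain ⟨k, hk⟩ : ∃ k, K = k + 1 := Nat.exists_eq_add_one_of_ne_zero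
      (Nat.mul_pos (Fintype.card_pos (α := X)) (Fintype.card_pos (α := Y))).ne'
    rw [hk, pow_succ]
    linarith [Nat.lt_two_pow_self (n := k)]
  have hpow : 2 * ((Fintype.card X : ℝ) * Fintype.card Y) ≤ ((n : ℝ) + 1) ^ K :=
    calc 2 * ((Fintype.card X : ℝ) * Fintype.card Y) ≤ 2 ^ K := by exact_mod_cast hK
      _ ≤ ((n : ℝ) + 1) ^ K := by gcongr; linarith [(Nat.one_le_cast (α := ℝ)).mpr hn]
  set t := ε / (2 * ((Fintype.card X : ℝ) * Fintype.card Y))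
  have ht : (ε / 2) ^ 2 / (2 * (Fintype.card X : ℝ) ^ 2 * (Fintype.card Y : ℝ) ^ 2) =
      t ^ 2 / 2 := by
    simp only [t]
    field_simp
  have hnt : 0 < n * t ^ 2 := by positivity
  rw [deltaT_eq_mul_exp, ht]
  refine mul_lt_mul' hpow (Real.exp_lt_exp.mpr ?_) (Real.exp_pos _).le (by positivity)
  linarith

end DeltaT

section Channel

variable {X Y : Type*} [Fintype X] [Fintype Y] [DecidableEq X] [DecidableEq Y]
  [MeasurableSpace Y] [MeasurableSingletonClass Y] {n : ℕ}
  {J : X → Y → ℝ} (hJ0 : ∀ a b, 0 ≤ J a b) (hJ1 : ∀ a, ∑ b, J a b = 1) (x : Fin n → X)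

noncomputable def channelMeasure : Measure (Fin n → Y) :=
  Measure.pi fun i => (realPMF (J (x i)) (hJ0 (x i)) (hJ1 (x i))).toMeasure

instance : IsProbabilityMeasure (channelMeasure hJ0 hJ1 x) := by
  unfold channelMeasure
  infer_instance

lemma measureReal_channelMeasure_deviation_le (a : X) (b : Y) {t : ℝ} (ht : 0 ≤ t) :
    (channelMeasure hJ0 hJ1 x).real {y | t < |jointType x y a b - empType x a * J a b|} ≤
      2 * Real.exp (-2 * n * t ^ 2) := by
  set f : Fin n → Y → ℝ := fun i b' => if x i = a ∧ b' = b then 1 else 0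
  have hf (i : Fin n) (b' : Y) : f i b' ∈ Set.Icc (0 : ℝ) 1 := by
    simp only [f]
    split_ifs <;> simp
  calc _ ≤ (channelMeasure hJ0 hJ1 x).real
        {y | n * t ≤ |∑ i, (f i (y i) - ∑ b', J (x i) b' * f i b')|} := by
        refine measureReal_mono fun y hy => ?_
        rw [Set.mem_ofPred, sum_indicator_sub_sum_mul_indicator, abs_mul, Nat.abs_cast]
        exact mul_le_mul_of_nonneg_left hy.le (Nat.cast_nonneg n)
    _ ≤ 2 * Real.exp (-2 * (n * t) ^ 2 / Fintype.card (Fin n)) :=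
        measureReal_pi_realPMF_le_abs_sum_sub_le _ _ _ f hf (by positivity)
    _ = 2 * Real.exp (-2 * n * t ^ 2) := by
        rw [Fintype.card_fin, mul_div_assoc, mul_pow, sq (n : ℝ),
          mul_div_right_comm ((n : ℝ) * n), mul_self_div_self, ← mul_assoc]

lemma measureReal_compl_condTypSet_le {P : X → Y → ℝ} (hP0 : ∀ a b, 0 ≤ P a b)
    {Q : X → ℝ} (hQ : ∀ a, Q a = ∑ b, P a b) (hJ : ∀ a b, Q a ≠ 0 → J a b = P a b / Q a)
    {ε : ℝ} (hε : 0 < ε) (hx : x ∈ typSet n Q (ε / (2 * Fintype.card Y))) :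
    (channelMeasure hJ0 hJ1 x).real (condTypSet n P ε x)ᶜ ≤
      ∑ ab : X × Y, (channelMeasure hJ0 hJ1 x).real
        {y | ε / (2 * (Fintype.card X * Fintype.card Y)) <
          |jointType x y ab.1 ab.2 - empType x ab.1 * J ab.1 ab.2|} := by
  have hcover : (condTypSet n P ε x)ᶜ ≤ᵐ[channelMeasure hJ0 hJ1 x] ⋃ ab : X × Y,
      {y | ε / (2 * (Fintype.card X * Fintype.card Y)) <
        |jointType x y ab.1 ab.2 - empType x ab.1 * J ab.1 ab.2|} := by
    filter_upwards [ae_pi_realPMF_ne_zero (fun i => J (x i)) (fun i => hJ0 (x i))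
      (fun i => hJ1 (x i))] with y hy hny
    obtain ⟨a, b, hab⟩ :=
      exists_lt_abs_jointType_sub_of_notMem_condTypSet hP0 hQ hJ hJ0 hJ1 hε hx hy hny
    exact Set.mem_iUnion.mpr ⟨(a, b), hab⟩
  exact (ENNReal.toReal_mono (measure_ne_top _ _) (measure_mono_ae hcover)).trans
    (measureReal_iUnion_fintype_le _)

lemma measureReal_compl_condTypSet_lt_deltaT [Nonempty X] [Nonempty Y] {P : X → Y → ℝ}
    (hP0 : ∀ a b, 0 ≤ P a b) {Q : X → ℝ} (hQ : ∀ a, Q a = ∑ b, P a b)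
    (hJ : ∀ a b, Q a ≠ 0 → J a b = P a b / Q a) {ε : ℝ} (hε : 0 < ε)
    (hx : x ∈ typSet n Q (ε / (2 * Fintype.card Y))) :
    (channelMeasure hJ0 hJ1 x).real (condTypSet n P ε x)ᶜ < deltaT X Y n (ε / 2) := by
  have hbad := measureReal_compl_condTypSet_le hJ0 hJ1 x hP0 hQ hJ hε hx
  set t := ε / (2 * ((Fintype.card X : ℝ) * Fintype.card Y))
  have ht : 0 < t := by positivity
  rcases n.eq_zero_or_pos with rfl | hn
  · -- with `n = 0` every empirical type is the junk value `0 / 0 = 0`, so no `y` deviates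
    have hnone : (channelMeasure hJ0 hJ1 x).real (condTypSet 0 P ε x)ᶜ ≤ 0 := by
      simpa [jointType, empType, ht.not_gt] using hbad
    have hδ : deltaT X Y 0 (ε / 2) = 1 := by simp [deltaT]
    linarith
  · calc _ ≤ ∑ _ab : X × Y, 2 * Real.exp (-2 * n * t ^ 2) :=
          hbad.trans (sum_le_sum fun ab _ =>
            measureReal_channelMeasure_deviation_le hJ0 hJ1 x _ _ ht.le)
      _ = 2 * (Fintype.card X * Fintype.card Y) * Real.exp (-2 * n * t ^ 2) := by
          rw [sum_const, card_univ, Fintype.card_prod, nsmul_eq_mul]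
          push_cast
          ring
      _ < deltaT X Y n (ε / 2) := two_mul_card_mul_exp_lt_deltaT X Y hn hε.ne'

end Channel

theorem condTypSet_probability_lower_bound_general
    {X Y : Type*} [Fintype X] [Fintype Y] [DecidableEq X] [DecidableEq Y]
    [Nonempty X] [Nonempty Y]
    {n : ℕ} (P : X → Y → ℝ) (hP0 : ∀ a b, 0 ≤ P a b)
    (Q : X → ℝ) (hQ : ∀ a, Q a = ∑ b, P a b)
    (J : X → Y → ℝ) (hJ : ∀ a b, Q a ≠ 0 → J a b = P a b / Q a)
    (hJ0 : ∀ a b, 0 ≤ J a b) (hJ1 : ∀ a, ∑ b, J a b = 1)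
    (ε : ℝ) (hε : 0 < ε)
    (x : Fin n → X) (hx : x ∈ typSet n Q (ε / (2 * Fintype.card Y))) :
    (∑ᶠ y ∈ condTypSet n P ε x, ∏ i, J (x i) (y i)) >
        1 - deltaT X Y n (ε / 2) ∧
      Tendsto (fun m : ℕ => deltaT X Y m (ε / 2)) atTop (nhds 0) := by
  classical
  refine ⟨?_, tendsto_deltaT X Y (div_ne_zero hε.ne' two_ne_zero)⟩
  let _ : MeasurableSpace Y := ⊤
  have hprob : (∑ᶠ y ∈ condTypSet n P ε x, ∏ i, J (x i) (y i)) =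
      1 - (channelMeasure hJ0 hJ1 x).real (condTypSet n P ε x)ᶜ := by
    rw [probReal_compl_eq_one_sub MeasurableSet.of_discrete, sub_sub_cancel,
      finsum_mem_eq_toFinset_sum, channelMeasure,
      ← measureReal_pi_realPMF (fun i => J (x i)) (fun i => hJ0 (x i)) (fun i => hJ1 (x i)),
      Set.coe_toFinset]
  rw [hprob, gt_iff_lt, sub_lt_sub_iff_left]
  exact measureReal_compl_condTypSet_lt_deltaT hJ0 hJ1 x hP0 hQ hJ hε hx

/-- lower bound on the probability of the conditionally typical
set, and the fact that it tends to 1 as n → ∞. -/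
theorem condTypSet_probability_lower_bound
    {X Y : Type*} [Fintype X] [Fintype Y] [DecidableEq X] [DecidableEq Y]
    [Nonempty X] [Nonempty Y]
    {n : ℕ} (P : X → Y → ℝ) (hP0 : ∀ a b, 0 ≤ P a b)
    (hP1 : ∑ a, ∑ b, P a b = 1)
    (Q : X → ℝ) (hQ : ∀ a, Q a = ∑ b, P a b)
    (J : X → Y → ℝ) (hJ : ∀ a b, Q a ≠ 0 → J a b = P a b / Q a)
    (hJ0 : ∀ a b, 0 ≤ J a b) (hJ1 : ∀ a, ∑ b, J a b = 1)
    (ε : ℝ) (hε : 0 < ε)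
    (x : Fin n → X) (hx : x ∈ typSet n Q (ε / (2 * Fintype.card Y))) :
    (∑ᶠ y ∈ condTypSet n P ε x, ∏ i, J (x i) (y i)) >
        1 - deltaT X Y n (ε / 2) ∧
      Tendsto (fun m : ℕ => deltaT X Y m (ε / 2)) atTop (nhds 0) :=
  condTypSet_probability_lower_bound_general P hP0 Q hQ J hJ hJ0 hJ1 ε hε x hx
end

section
/- Concentration of output type: let p_{Y|X} be a channel from finite X to finite Y matching a conditional type J, let Q be a distribution on Y, and suppose N ∈ P_pim(Q, p_{Y|X}), i.e., Σ_a N(a)J(·|a) = Q. If the input sequences x^(n) satisfy V(N, P_{x^(n)}) → 0 in probability, then the channel outputs y^(n) satisfy V(Q, P_{y^(n)}) → 0 in probability. -/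
open Finset Filter

/-!
Given the input `x`, the output letters `y k` are independent with laws `W (x k) ·`, so the
number of occurrences of `b` in `y` has mean `∑ k, W (x k) b = n • outputDist W (empType x) b`
and variance at most `n`. By Chebyshev, `empType y` is then within `δ` of `outputDist W (empType x)`
in every coordinate except with probability at most `|Y| / (n δ²)`. A stochastic matrix contracts
the `ℓ¹` distance, so `‖Q - outputDist W (empType x)‖₁ ≤ ‖N - empType x‖₁`, and a union bound gives
`P(‖Q - empType y‖₁ > ε) ≤ P(‖N - empType x‖₁ > ε / 2) + |Y| / (n δ²)` with `δ = ε / (2 |Y|)`.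
-/

section ProductWeights

variable {ι Y : Type*} [Fintype ι] [DecidableEq ι] [Fintype Y] (w : ι → Y → ℝ)

theorem sum_prod_mul_prod_eq_prod_sum (s : Finset ι) (h : ι → Y → ℝ)
    (hw : ∀ k ∉ s, ∑ c, w k c = 1) :
    ∑ y : ι → Y, (∏ k, w k (y k)) * ∏ k ∈ s, h k (y k) = ∏ k ∈ s, ∑ c, w k c * h k c := by
  have hfactor : ∀ y : ι → Y, (∏ k, w k (y k)) * ∏ k ∈ s, h k (y k)
      = ∏ k, w k (y k) * (if k ∈ s then h k (y k) else 1) := by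
    intro y
    rw [Finset.prod_mul_distrib, Finset.prod_ite_mem, Finset.univ_inter]
  have hcoord : ∀ k, ∑ c, w k c * (if k ∈ s then h k c else 1)
      = if k ∈ s then ∑ c, w k c * h k c else 1 := by
    intro k
    split_ifs with hk
    · rfl
    · simpa using hw k hk
  simp_rw [hfactor]
  rw [← Fintype.prod_sum fun k c => w k c * if k ∈ s then h k c else 1]
  simp_rw [hcoord]
  rw [Finset.prod_ite_mem, Finset.univ_inter]

variable {w}

theorem sum_prod_eq_one (hw : ∀ k, ∑ c, w k c = 1) : ∑ y : ι → Y, ∏ k, w k (y k) = 1 := by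
  rw [← Fintype.prod_sum]
  simp [hw]

theorem sum_prod_mul_sq_sum_eq (g : ι → Y → ℝ) (hw : ∀ k, ∑ c, w k c = 1)
    (hg : ∀ k, ∑ c, w k c * g k c = 0) :
    ∑ y : ι → Y, (∏ k, w k (y k)) * (∑ i, g i (y i)) ^ 2 = ∑ i, ∑ c, w i c * g i c ^ 2 := by
  have hdiag : ∀ i, ∑ y : ι → Y, (∏ k, w k (y k)) * (g i (y i) * g i (y i))
      = ∑ c, w i c * g i c ^ 2 := by
    intro i
    simp_rw [← sq]
    simpa only [Finset.prod_singleton] using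
      sum_prod_mul_prod_eq_prod_sum w {i} (fun k c => g k c ^ 2) fun k _ => hw k
  have hoff : ∀ i j, j ≠ i → ∑ y : ι → Y, (∏ k, w k (y k)) * (g i (y i) * g j (y j)) = 0 := by
    intro i j hji
    have hpair : ∀ y : ι → Y, g i (y i) * g j (y j) = ∏ k ∈ {i, j}, g k (y k) :=
      fun y => (Finset.prod_pair (f := fun k => g k (y k)) hji.symm).symm
    simp_rw [hpair]
    rw [sum_prod_mul_prod_eq_prod_sum w {i, j} g fun k _ => hw k, Finset.prod_pair hji.symm,
      hg i, zero_mul]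
  calc ∑ y : ι → Y, (∏ k, w k (y k)) * (∑ i, g i (y i)) ^ 2
      = ∑ i, ∑ j, ∑ y : ι → Y, (∏ k, w k (y k)) * (g i (y i) * g j (y j)) := by
        simp_rw [sq, Finset.sum_mul_sum, Finset.mul_sum]
        rw [Finset.sum_comm]
        exact Finset.sum_congr rfl fun i _ => Finset.sum_comm
    _ = ∑ i, ∑ c, w i c * g i c ^ 2 := by
        refine Finset.sum_congr rfl fun i _ => ?_
        rw [Finset.sum_eq_single_of_mem i (Finset.mem_univ i) fun j _ hji => hoff i j hji,
          hdiag]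

end ProductWeights

theorem sum_filter_lt_abs_le {α : Type*} [Fintype α] (μ : α → ℝ) (f : α → ℝ)
    (hμ : ∀ a, 0 ≤ μ a) {δ : ℝ} (hδ : 0 < δ) :
    ∑ a ∈ Finset.univ.filter (fun a => δ < |f a|), μ a ≤ (∑ a, μ a * f a ^ 2) / δ ^ 2 := by
  rw [le_div_iff₀ (by positivity), Finset.sum_mul]
  calc ∑ a ∈ Finset.univ.filter (fun a => δ < |f a|), μ a * δ ^ 2
      ≤ ∑ a ∈ Finset.univ.filter (fun a => δ < |f a|), μ a * f a ^ 2 := by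
        refine Finset.sum_le_sum fun a ha => mul_le_mul_of_nonneg_left ?_ (hμ a)
        have := (Finset.mem_filter.mp ha).2
        rw [← sq_abs (f a)]
        exact pow_le_pow_left₀ hδ.le this.le 2
    _ ≤ ∑ a, μ a * f a ^ 2 :=
        Finset.sum_le_sum_of_subset_of_nonneg (Finset.filter_subset _ _)
          fun a _ _ => mul_nonneg (hμ a) (sq_nonneg _)

theorem sum_filter_le_sum_filter_add_sum_sum_filter {α ι : Type*} [Fintype α] [Fintype ι]
    (f : α → ℝ) (hf : ∀ a, 0 ≤ f a) (P A : α → Prop) (B : ι → α → Prop) [DecidablePred P]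
    [DecidablePred A] [∀ i, DecidablePred (B i)] (h : ∀ a, P a → A a ∨ ∃ i, B i a) :
    ∑ a ∈ Finset.univ.filter P, f a
      ≤ ∑ a ∈ Finset.univ.filter A, f a + ∑ i, ∑ a ∈ Finset.univ.filter (B i), f a := by
  simp only [Finset.sum_filter]
  rw [Finset.sum_comm, ← Finset.sum_add_distrib]
  refine Finset.sum_le_sum fun a _ => ?_
  have hB : ∀ i, 0 ≤ if B i a then f a else 0 := fun i => by split_ifs <;> simp [hf a]
  split_ifs with hP hA
  · linarith [Finset.sum_nonneg fun i (_ : i ∈ Finset.univ) => hB i]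
  · obtain ⟨i, hi⟩ := (h a hP).resolve_left hA
    simpa [hi] using Finset.single_le_sum (fun j _ => hB j) (Finset.mem_univ i)
  · linarith [Finset.sum_nonneg fun i (_ : i ∈ Finset.univ) => hB i, hf a]
  · simpa using Finset.sum_nonneg fun i (_ : i ∈ Finset.univ) => hB i

section Kernel

variable {α β : Type*} [Fintype α] [Fintype β] (p : α → ℝ) {K : α → β → ℝ}

theorem sum_filter_fst_mul_kernel_eq (hK : ∀ a, ∑ b, K a b = 1) (A : α → Prop)
    [DecidablePred A] :
    ∑ q ∈ Finset.univ.filter (fun q : α × β => A q.1), p q.1 * K q.1 q.2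
      = ∑ a ∈ Finset.univ.filter A, p a := by
  simp only [Finset.sum_filter, Fintype.sum_prod_type]
  refine Finset.sum_congr rfl fun a _ => ?_
  split_ifs
  · rw [← Finset.mul_sum, hK, mul_one]
  · simp

theorem sum_filter_mul_kernel_le (hp0 : ∀ a, 0 ≤ p a) (hp1 : ∑ a, p a = 1)
    (B : α → β → Prop) [∀ a, DecidablePred (B a)] {c : ℝ}
    (hK : ∀ a, ∑ b ∈ Finset.univ.filter (B a), K a b ≤ c) :
    ∑ q ∈ Finset.univ.filter (fun q : α × β => B q.1 q.2), p q.1 * K q.1 q.2 ≤ c := by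
  rw [Finset.sum_filter, Fintype.sum_prod_type]
  calc ∑ a, ∑ b, (if B a b then p a * K a b else 0)
      = ∑ a, p a * ∑ b ∈ Finset.univ.filter (B a), K a b := by
        simp only [Finset.mul_sum, Finset.sum_filter, mul_ite, mul_zero]
    _ ≤ ∑ a, p a * c := Finset.sum_le_sum fun a _ => mul_le_mul_of_nonneg_left (hK a) (hp0 a)
    _ = c := by rw [← Finset.sum_mul, hp1, one_mul]

end Kernel

section Channel

variable {X Y : Type*} {W : X → Y → ℝ}

def outputDist [Fintype X] (W : X → Y → ℝ) (P : X → ℝ) (b : Y) : ℝ := ∑ a, P a * W a b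

theorem sum_abs_outputDist_sub_le [Fintype X] [Fintype Y] (hW0 : ∀ a b, 0 ≤ W a b)
    (hW1 : ∀ a, ∑ b, W a b = 1) (P P' : X → ℝ) :
    ∑ b, |outputDist W P b - outputDist W P' b| ≤ ∑ a, |P a - P' a| :=
  calc ∑ b, |outputDist W P b - outputDist W P' b|
      = ∑ b, |∑ a, (P a - P' a) * W a b| := by
        simp only [outputDist, ← Finset.sum_sub_distrib, sub_mul]
    _ ≤ ∑ b, ∑ a, |P a - P' a| * W a b := Finset.sum_le_sum fun b _ =>
        (Finset.abs_sum_le_sum_abs _ _).trans_eq <| by simp only [abs_mul, abs_of_nonneg (hW0 _ b)]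
    _ = ∑ a, |P a - P' a| := by
        rw [Finset.sum_comm]
        simp only [← Finset.mul_sum, hW1, mul_one]

variable {n : ℕ}

theorem empType_eq_sum_ite {Z : Type*} [Fintype Z] [DecidableEq Z] (z : Fin n → Z) (a : Z) :
    empType z a = (∑ k, if z k = a then (1 : ℝ) else 0) / n := by
  rw [empType, Finset.natCast_card_filter]

theorem outputDist_empType [Fintype X] [DecidableEq X] (W : X → Y → ℝ) (x : Fin n → X)
    (b : Y) : outputDist W (empType x) b = (∑ k, W (x k) b) / n := by
  simp only [outputDist, empType_eq_sum_ite, div_mul_eq_mul_div, ← Finset.sum_div,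
    Finset.sum_mul, ite_mul, one_mul, zero_mul]
  rw [Finset.sum_comm]
  simp

theorem empType_sub_outputDist_empType [Fintype X] [DecidableEq X] [Fintype Y]
    [DecidableEq Y] (W : X → Y → ℝ) (x : Fin n → X) (y : Fin n → Y) (b : Y) :
    empType y b - outputDist W (empType x) b
      = (∑ k, ((if y k = b then 1 else 0) - W (x k) b)) / n := by
  rw [empType_eq_sum_ite, outputDist_empType, ← sub_div, Finset.sum_sub_distrib]

theorem sum_prod_mul_sq_sum_ite_sub_le [Fintype Y] [DecidableEq Y] (hW0 : ∀ a b, 0 ≤ W a b)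
    (hW1 : ∀ a, ∑ b, W a b = 1) (x : Fin n → X) (b : Y) :
    ∑ y : Fin n → Y, (∏ k, W (x k) (y k)) *
      (∑ k, ((if y k = b then 1 else 0) - W (x k) b)) ^ 2 ≤ n := by
  have hcentered : ∀ k, ∑ c, W (x k) c * ((if c = b then 1 else 0) - W (x k) b) = 0 := by
    intro k
    simp [mul_sub, Finset.sum_sub_distrib, ← Finset.sum_mul, hW1]
  rw [sum_prod_mul_sq_sum_eq _ (fun k => hW1 (x k)) hcentered]
  calc ∑ k, ∑ c, W (x k) c * ((if c = b then 1 else 0) - W (x k) b) ^ 2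
      ≤ ∑ k : Fin n, ∑ c, W (x k) c := by
        refine Finset.sum_le_sum fun k _ => Finset.sum_le_sum fun c _ => ?_
        have hle : W (x k) b ≤ 1 :=
          hW1 (x k) ▸ Finset.single_le_sum (fun c _ => hW0 _ c) (Finset.mem_univ b)
        have hsq : ((if c = b then 1 else 0) - W (x k) b) ^ 2 ≤ 1 := by
          rw [sq_le_one_iff_abs_le_one, abs_le]
          constructor <;> split_ifs <;> linarith [hW0 (x k) b]
        exact mul_le_of_le_one_right (hW0 _ c) hsq
    _ = n := by simp [hW1]

theorem sum_filter_lt_abs_empType_sub_le [Fintype X] [DecidableEq X] [Fintype Y]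
    [DecidableEq Y] (hW0 : ∀ a b, 0 ≤ W a b) (hW1 : ∀ a, ∑ b, W a b = 1) (x : Fin n → X) (b : Y)
    (hn : 0 < n) {δ : ℝ} (hδ : 0 < δ) :
    ∑ y ∈ Finset.univ.filter
        (fun y : Fin n → Y => δ < |empType y b - outputDist W (empType x) b|),
      ∏ k, W (x k) (y k) ≤ 1 / (n * δ ^ 2) := by
  have hn' : (0 : ℝ) < n := Nat.cast_pos.mpr hn
  calc _ ≤ (∑ y : Fin n → Y, (∏ k, W (x k) (y k)) *
          (empType y b - outputDist W (empType x) b) ^ 2) / δ ^ 2 :=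
        sum_filter_lt_abs_le _ _ (fun y => Finset.prod_nonneg fun k _ => hW0 _ _) hδ
    _ = (∑ y : Fin n → Y, (∏ k, W (x k) (y k)) *
          (∑ k, ((if y k = b then 1 else 0) - W (x k) b)) ^ 2) / n ^ 2 / δ ^ 2 := by
        simp only [empType_sub_outputDist_empType, div_pow, ← mul_div_assoc, ← Finset.sum_div]
    _ ≤ n / n ^ 2 / δ ^ 2 := by
        gcongr
        exact sum_prod_mul_sq_sum_ite_sub_le hW0 hW1 x b
    _ = 1 / (n * δ ^ 2) := by field_simp

theorem lt_sum_abs_sub_empType_or_exists_lt [Fintype X] [DecidableEq X] [Fintype Y]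
    [DecidableEq Y] [Nonempty Y] (hW0 : ∀ a b, 0 ≤ W a b) (hW1 : ∀ a, ∑ b, W a b = 1)
    (N : X → ℝ) (x : Fin n → X) (y : Fin n → Y) {ε : ℝ}
    (h : ε < ∑ b, |outputDist W N b - empType y b|) :
    ε / 2 < ∑ a, |N a - empType x a| ∨
      ∃ b, ε / (2 * Fintype.card Y) < |empType y b - outputDist W (empType x) b| := by
  by_contra! hcon
  obtain ⟨hin, hout⟩ := hcon
  have hcard : (0 : ℝ) < Fintype.card Y := Nat.cast_pos.mpr Fintype.card_pos
  have hout_sum : ∑ b, |outputDist W (empType x) b - empType y b| ≤ ε / 2 := by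
    calc _ ≤ ∑ _b : Y, ε / (2 * Fintype.card Y) :=
          Finset.sum_le_sum fun b _ => abs_sub_comm (empType y b) _ ▸ hout b
      _ = ε / 2 := by
          rw [Finset.sum_const, Finset.card_univ, nsmul_eq_mul]
          field_simp
  have htri : ∑ b, |outputDist W N b - empType y b|
      ≤ ∑ b, |outputDist W N b - outputDist W (empType x) b|
        + ∑ b, |outputDist W (empType x) b - empType y b| := by
    rw [← Finset.sum_add_distrib]
    exact Finset.sum_le_sum fun b _ => abs_sub_le _ _ _
  linarith [sum_abs_outputDist_sub_le hW0 hW1 N (empType x)]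

theorem sum_filter_lt_sum_abs_outputDist_sub_empType_le [Fintype X] [DecidableEq X] [Fintype Y]
    [DecidableEq Y] [Nonempty Y] (hW0 : ∀ a b, 0 ≤ W a b) (hW1 : ∀ a, ∑ b, W a b = 1)
    (N : X → ℝ) (p : (Fin n → X) → ℝ) (hp0 : ∀ x, 0 ≤ p x) (hp1 : ∑ x, p x = 1) (hn : 0 < n)
    {ε : ℝ} (hε : 0 < ε) :
    ∑ q ∈ Finset.univ.filter (fun q : (Fin n → X) × (Fin n → Y) =>
        ε < ∑ b, |outputDist W N b - empType q.2 b|), p q.1 * ∏ k, W (q.1 k) (q.2 k)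
      ≤ ∑ x ∈ Finset.univ.filter (fun x => ε / 2 < ∑ a, |N a - empType x a|), p x
        + Fintype.card Y / (ε / (2 * Fintype.card Y)) ^ 2 / n := by
  have hδ : 0 < ε / (2 * Fintype.card Y) := by
    have : (0 : ℝ) < Fintype.card Y := Nat.cast_pos.mpr Fintype.card_pos
    positivity
  refine (sum_filter_le_sum_filter_add_sum_sum_filter
    (fun q : (Fin n → X) × (Fin n → Y) => p q.1 * ∏ k, W (q.1 k) (q.2 k))
    (fun q => mul_nonneg (hp0 q.1) (Finset.prod_nonneg fun k _ => hW0 _ _))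
    (fun q => ε < ∑ b, |outputDist W N b - empType q.2 b|)
    (fun q => ε / 2 < ∑ a, |N a - empType q.1 a|)
    (fun b q => ε / (2 * Fintype.card Y) < |empType q.2 b - outputDist W (empType q.1) b|)
    fun q => lt_sum_abs_sub_empType_or_exists_lt hW0 hW1 N q.1 q.2).trans ?_
  rw [sum_filter_fst_mul_kernel_eq p (K := fun x (y : Fin n → Y) => ∏ k, W (x k) (y k))
    (fun x => sum_prod_eq_one fun k => hW1 (x k)) (fun x => ε / 2 < ∑ a, |N a - empType x a|)]
  grw [Finset.sum_le_sum fun b _ => sum_filter_mul_kernel_le p hp0 hp1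
    (fun x y => ε / (2 * Fintype.card Y) < |empType y b - outputDist W (empType x) b|)
    fun x => sum_filter_lt_abs_empType_sub_le hW0 hW1 x b hn hδ]
  rw [Finset.sum_const, Finset.card_univ, nsmul_eq_mul, ← div_mul_eq_div_div_swap, mul_one_div]

end Channel

theorem finsum_eq_sum_filter {α : Type*} [Fintype α] (P : α → Prop) [DecidablePred P]
    (f : α → ℝ) : ∑ᶠ (a) (_ : P a), f a = ∑ a ∈ Finset.univ.filter P, f a :=
  by rw [← finsum_mem_coe_finset, Finset.coe_filter_univ]; rfl

theorem output_type_concentration_general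
    {X Y : Type*} [Fintype X] [Fintype Y] [DecidableEq X] [DecidableEq Y]
    [Nonempty Y]
    (W : X → Y → ℝ) (hW0 : ∀ a b, 0 ≤ W a b) (hW1 : ∀ a, ∑ b, W a b = 1)
    (N : X → ℝ)
    (Q : Y → ℝ) (hpre : ∀ b, ∑ a, N a * W a b = Q b)
    (p : (n : ℕ) → (Fin n → X) → ℝ)
    (hp0 : ∀ n x, 0 ≤ p n x) (hp1 : ∀ n, ∑ x, p n x = 1)
    (hin : ∀ ε > (0 : ℝ),
      Tendsto
        (fun n => ∑ᶠ x ∈ {x : Fin n → X | (∑ a, |N a - empType x a|) > ε}, p n x)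
        atTop (nhds 0)) :
    ∀ ε > (0 : ℝ),
      Tendsto
        (fun n =>
          ∑ᶠ q ∈ {q : (Fin n → X) × (Fin n → Y) |
              (∑ b, |Q b - empType q.2 b|) > ε},
            p n q.1 * ∏ i, W (q.1 i) (q.2 i))
        atTop (nhds 0) := by
  intro ε hε
  have hQ : Q = outputDist W N := funext fun b => (hpre b).symm
  have hbound := (hin (ε / 2) (half_pos hε)).add <|
    tendsto_const_div_atTop_nhds_zero_nat ((Fintype.card Y : ℝ) / (ε / (2 * Fintype.card Y)) ^ 2)
  rw [add_zero] at hbound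
  refine squeeze_zero' (Eventually.of_forall fun n => ?_) ?_ hbound
  · exact finsum_nonneg fun q => finsum_nonneg fun _ =>
      mul_nonneg (hp0 n q.1) (Finset.prod_nonneg fun k _ => hW0 _ _)
  · filter_upwards [eventually_gt_atTop 0] with n hn
    rw [finsum_eq_sum_filter, finsum_eq_sum_filter, hQ]
    exact sum_filter_lt_sum_abs_outputDist_sub_empType_le hW0 hW1 N (p n) (hp0 n) (hp1 n) hn hε

/-- concentration of the output type: if the input type converges
in probability to N and N is in the pre-image of Q under the channel, then the
output type converges in probability to Q. -/
theorem output_type_concentration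
    {X Y : Type*} [Fintype X] [Fintype Y] [DecidableEq X] [DecidableEq Y]
    [Nonempty X] [Nonempty Y]
    (W : X → Y → ℝ) (hW0 : ∀ a b, 0 ≤ W a b) (hW1 : ∀ a, ∑ b, W a b = 1)
    (N : X → ℝ) (hN0 : ∀ a, 0 ≤ N a) (hN1 : ∑ a, N a = 1)
    (Q : Y → ℝ) (hpre : ∀ b, ∑ a, N a * W a b = Q b)
    (p : (n : ℕ) → (Fin n → X) → ℝ)
    (hp0 : ∀ n x, 0 ≤ p n x) (hp1 : ∀ n, ∑ x, p n x = 1)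
    (hin : ∀ ε > (0 : ℝ),
      Tendsto
        (fun n => ∑ᶠ x ∈ {x : Fin n → X | (∑ a, |N a - empType x a|) > ε}, p n x)
        atTop (nhds 0)) :
    ∀ ε > (0 : ℝ),
      Tendsto
        (fun n =>
          ∑ᶠ q ∈ {q : (Fin n → X) × (Fin n → Y) |
              (∑ b, |Q b - empType q.2 b|) > ε},
            p n q.1 * ∏ i, W (q.1 i) (q.2 i))
        atTop (nhds 0) :=
  output_type_concentration_general W hW0 hW1 N Q hpre p hp0 hp1 hin
end
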